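/- arXiv:2504.19751 — 2 statements merged into one kernel-verified Lean document; each statement's English description precedes it below -/
import Mathlib

section
/- For every graph G, tw(G) + 1 ≤ tree-α(G)^2 · tree-χ(G). -/
open SimpleGraph

structure TreeDecomp {V : Type} (G : SimpleGraph V) where
  ι : Type
  tree : SimpleGraph ι
  isTree : tree.IsTree
  bag : ι → Finset V
  covers_edge : ∀ ⦃u v : V⦄, G.Adj u v → ∃ t, u ∈ bag t ∧ v ∈ bag t
  support_connected : ∀ v : V, (tree.induce {t | v ∈ bag t}).Connected

noncomputable def indepNum {V : Type} (G : SimpleGraph V) (s : Set V) : ℕ :=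
  sSup {n | ∃ t : Finset V, ↑t ⊆ s ∧ (↑t : Set V).Pairwise (fun a b => ¬ G.Adj a b) ∧ t.card = n}

noncomputable def alpha {V : Type} (G : SimpleGraph V) : ℕ := indepNum G Set.univ

noncomputable def chiNat {V : Type} (G : SimpleGraph V) : ℕ := G.chromaticNumber.toNat

noncomputable def tw {V : Type} (G : SimpleGraph V) : ℕ :=
  sInf {w | ∃ D : TreeDecomp G, ∀ t, (D.bag t).card ≤ w + 1}

noncomputable def treeAlpha {V : Type} (G : SimpleGraph V) : ℕ :=
  sInf {k | ∃ D : TreeDecomp G, ∀ t, indepNum G ↑(D.bag t) ≤ k}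

noncomputable def treeChi {V : Type} (G : SimpleGraph V) : ℕ :=
  sInf {k | ∃ D : TreeDecomp G, ∀ t, chiNat (G.induce ↑(D.bag t)) ≤ k}

noncomputable def treeTw {V : Type} (G : SimpleGraph V) : ℕ :=
  sInf {k | ∃ D : TreeDecomp G, ∀ t, tw (G.induce ↑(D.bag t)) ≤ k}

noncomputable def omegaNum {V : Type} (G : SimpleGraph V) : ℕ :=
  sSup {n | ∃ t : Finset V, G.IsClique ↑t ∧ t.card = n}

def completion {V : Type} (H : SimpleGraph V) :
    SimpleGraph (V ⊕ {p : Sym2 V // ¬ p.IsDiag ∧ p ∉ H.edgeSet}) :=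
  SimpleGraph.fromRel (fun x y =>
    match x, y with
    | .inl u, .inl v => H.Adj u v
    | .inl u, .inr p => u ∈ p.1
    | _, _ => False)

/-!
Let `a` and `c` be the tree-α and tree-χ of `G`, attained by tree-decompositions `Da` and `Dc`.
Colour classes are independent, so every bag `S` of `Da` has `|S| ≤ α(S) χ(G[S]) ≤ a χ(G[S])`.
Restricting `Dc` to `G[S]` gives a tree-decomposition of `G[S]` whose bags `B` have
`|B| ≤ α(B) χ(G[B]) ≤ a c`; and a graph with a tree-decomposition into bags of size at most `w` is
`w`-colourable, since some vertex has all its neighbours in one bag with it, so it can be coloured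
last. Hence `χ(G[S]) ≤ a c`, every bag of `Da` has at most `a² c` vertices, and `tw G + 1 ≤ a² c`.
-/

namespace SimpleGraph

section RootedTree

variable {ι : Type} {T : SimpleGraph ι}

lemma exists_isPath_of_connected_induce {A : Set ι} (hA : (T.induce A).Connected) {x y : ι}
    (hx : x ∈ A) (hy : y ∈ A) : ∃ p : T.Walk x y, p.IsPath ∧ ∀ z ∈ p.support, z ∈ A := by
  classical
  obtain ⟨w⟩ := hA ⟨x, hx⟩ ⟨y, hy⟩
  refine ⟨(w.map (Embedding.induce A).toHom).bypass, Walk.bypass_isPath _, fun z hz => ?_⟩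
  obtain ⟨z', -, rfl⟩ :=
    List.mem_map.mp (Walk.support_map _ _ ▸ Walk.support_bypass_subset_support _ hz)
  exact z'.2

lemma IsTree.eq_of_adj_of_dist_add_one (hT : T.IsTree) {r x a b : ι} (ha : T.Adj x a)
    (hb : T.Adj x b) (hda : T.dist r a + 1 = T.dist r x) (hdb : T.dist r b + 1 = T.dist r x) :
    a = b := by
  obtain ⟨Q, -, hQ⟩ := hT.existsUnique_path x r
  -- a step towards `r` followed by a geodesic is a geodesic, hence the unique path to `r`
  have eq_snd : ∀ z (hz : T.Adj x z), T.dist r z + 1 = T.dist r x → z = Q.snd := by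
    intro z hz hdz
    obtain ⟨P, -, hP⟩ := hT.connected.exists_path_of_dist z r
    have hpath : (Walk.cons hz P).IsPath := by
      refine Walk.isPath_of_length_eq_dist _ ?_
      rw [Walk.length_cons, hP, dist_comm, hdz, dist_comm]
    rw [← hQ _ hpath, Walk.snd_cons]
  rw [eq_snd a ha hda, eq_snd b hb hdb]

lemma IsTree.exists_adj_dist_add_one_mem_support (hT : T.IsTree) {r : ι} {x y : ι}
    (p : T.Walk x y) (hp : p.IsPath) (hxy : T.dist r y < T.dist r x) :
    ∃ z, T.Adj x z ∧ T.dist r z + 1 = T.dist r x ∧ z ∈ p.support := by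
  induction p with
  | nil => omega
  | @cons x z y h q ih =>
    rcases hT.dist_eq_dist_add_one_of_adj r h with hzx | hxz
    · exact ⟨z, h, hzx.symm, by simp⟩
    · obtain ⟨z', hz', hdz', hz'q⟩ := ih hp.of_cons (by omega)
      have : z' = x := hT.eq_of_adj_of_dist_add_one hz' h.symm (by omega) hxz.symm
      exact absurd (this ▸ hz'q) (Walk.cons_isPath_iff h q |>.mp hp).2

lemma IsTree.eq_of_isMinOn_dist (hT : T.IsTree) {r : ι} {A : Set ι}
    (hA : (T.induce A).Connected) {m z : ι} (hm : m ∈ A) (hmin : IsMinOn (T.dist r) A m)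
    (hz : z ∈ A) (hzm : T.dist r z ≤ T.dist r m) : z = m := by
  by_contra hne
  obtain ⟨p, hp, hpA⟩ := exists_isPath_of_connected_induce hA hz hm
  cases p with
  | nil => exact hne rfl
  | @cons _ c _ h q =>
    have hc := isMinOn_iff.mp hmin c (hpA c (by simp))
    have hz' := isMinOn_iff.mp hmin z hz
    rcases hT.dist_eq_dist_add_one_of_adj r h with hzc | hcz
    · omega
    · obtain ⟨z', hz', hdz', hz'q⟩ :=
        hT.exists_adj_dist_add_one_mem_support (r := r) q hp.of_cons (by omega)
      have : z' = z := hT.eq_of_adj_of_dist_add_one hz' h.symm (by omega) hcz.symm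
      exact absurd (this ▸ hz'q) (Walk.cons_isPath_iff h q |>.mp hp).2

lemma IsTree.mem_of_isMinOn_dist (hT : T.IsTree) {r : ι} {A B : Set ι}
    (hA : (T.induce A).Connected) (hB : (T.induce B).Connected) {m m' z : ι}
    (hm : m ∈ A) (hmin : IsMinOn (T.dist r) A m) (hm' : m' ∈ B) (hle : T.dist r m' ≤ T.dist r m)
    (hzA : z ∈ A) (hzB : z ∈ B) : m ∈ B := by
  induction hn : T.dist r z using Nat.strong_induction_on generalizing z with
  | _ n ih =>
    by_cases hzm : T.dist r z ≤ T.dist r m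
    · exact hT.eq_of_isMinOn_dist hA hm hmin hzA hzm ▸ hzB
    -- the paths from `z` to `m` in `A` and to `m'` in `B` both pass through the parent of `z`
    obtain ⟨pA, hpA, hpA_sub⟩ := exists_isPath_of_connected_induce hA hzA hm
    obtain ⟨pB, hpB, hpB_sub⟩ := exists_isPath_of_connected_induce hB hzB hm'
    obtain ⟨a, ha, hda, haA⟩ :=
      hT.exists_adj_dist_add_one_mem_support (r := r) pA hpA (by omega)
    obtain ⟨b, hb, hdb, hbB⟩ :=
      hT.exists_adj_dist_add_one_mem_support (r := r) pB hpB (by omega)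
    obtain rfl := hT.eq_of_adj_of_dist_add_one ha hb hda hdb
    exact ih _ (by omega) (hpA_sub a haA) (hpB_sub a hbB) rfl

end RootedTree

section Coloring

variable {V : Type} {G : SimpleGraph V}

lemma Colorable.of_induce_ne_of_adj_subset {v : V} {n : ℕ} {N : Finset V}
    (h : (G.induce {x | x ≠ v}).Colorable n) (hN : ∀ u, G.Adj v u → u ∈ N) (hn : N.card < n) :
    G.Colorable n := by
  classical
  obtain ⟨C⟩ := h
  obtain ⟨c, -, hc⟩ := Finset.exists_mem_notMem_of_card_lt_card
    (s := (N.subtype (· ≠ v)).image C) (t := Finset.univ) <| by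
      calc _ ≤ (N.subtype (· ≠ v)).card := Finset.card_image_le
        _ ≤ N.card := (Finset.card_subtype _ _).trans_le (Finset.card_filter_le _ _)
        _ < n := hn
        _ = _ := by simp
  have hc' : ∀ u (hu : u ≠ v), G.Adj v u → C ⟨u, hu⟩ ≠ c := fun u hu hvu hEq =>
    hc (Finset.mem_image.mpr ⟨⟨u, hu⟩, by simpa using hN u hvu, hEq⟩)
  refine ⟨Coloring.mk (fun x => if hx : x = v then c else C ⟨x, hx⟩) fun {a b} hab => ?_⟩
  by_cases ha : a = v <;> by_cases hb : b = v
  · exact absurd (ha.trans hb.symm) hab.ne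
  · subst ha; simpa [hb] using (hc' b hb hab).symm
  · subst hb; simpa [ha] using hc' a ha hab.symm
  · simpa [ha, hb] using C.valid (show (G.induce {x | x ≠ v}).Adj ⟨a, ha⟩ ⟨b, hb⟩ from hab)

end Coloring

end SimpleGraph

section IndepNumChiNat

variable {V W : Type} {G : SimpleGraph V}

lemma le_indepNum [Fintype V] {s : Set V} {t : Finset V} (hts : ↑t ⊆ s)
    (ht : G.IsIndepSet ↑t) : t.card ≤ indepNum G s :=
  le_csSup ⟨Fintype.card V, fun _ ⟨u, _, _, hu⟩ => hu ▸ u.card_le_univ⟩ ⟨t, hts, ht, rfl⟩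

lemma indepNum_le {s : Set V} {m : ℕ}
    (h : ∀ t : Finset V, ↑t ⊆ s → G.IsIndepSet ↑t → t.card ≤ m) : indepNum G s ≤ m :=
  csSup_le ⟨0, ∅, by simp⟩ fun _ ⟨t, hts, ht, hn⟩ => hn ▸ h t hts ht

lemma card_le_indepNum_of_isIndepSet_induce [Fintype V] {s : Set V} {t : Finset s}
    (ht : (G.induce s).IsIndepSet ↑t) : t.card ≤ indepNum G s := by
  rw [← Finset.card_map (Function.Embedding.subtype _)]
  refine le_indepNum (by simp) ?_
  rw [Finset.coe_map]
  rintro _ ⟨a, ha, rfl⟩ _ ⟨b, hb, rfl⟩ hab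
  exact ht ha hb (ne_of_apply_ne _ hab)

lemma indepNum_induce_le [Fintype V] (s : Set V) (B : Set s) :
    indepNum (G.induce s) B ≤ indepNum G s :=
  indepNum_le fun _ _ ht => card_le_indepNum_of_isIndepSet_induce ht

lemma card_le_indepNum_mul_of_colorable [Fintype V] (s : Finset V) {n : ℕ}
    (h : (G.induce ↑s).Colorable n) : s.card ≤ indepNum G ↑s * n := by
  classical
  obtain ⟨C⟩ := h
  have hclass : ∀ i, (Finset.univ.filter fun x => C x = i).card ≤ indepNum G ↑s := fun i =>
    card_le_indepNum_of_isIndepSet_induce fun a ha b hb hab hadj =>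
      C.valid hadj ((Finset.mem_filter.mp ha).2.trans (Finset.mem_filter.mp hb).2.symm)
  calc s.card = (Finset.univ : Finset (↑s : Set V)).card := by simp
    _ ≤ indepNum G ↑s * (Finset.univ.image C).card :=
      Finset.card_le_mul_card_image _ _ fun i _ => hclass i
    _ ≤ indepNum G ↑s * n := by
      gcongr
      exact (Finset.card_le_univ _).trans (Fintype.card_fin n).le

lemma colorable_chiNat [Finite W] (Y : SimpleGraph W) : Y.Colorable (chiNat Y) :=
  Y.colorable_chromaticNumber_of_fintype

lemma chiNat_le_of_colorable {Y : SimpleGraph W} {n : ℕ} (h : Y.Colorable n) : chiNat Y ≤ n :=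
  ENat.toNat_le_of_le_natCast h.chromaticNumber_le

lemma chiNat_le_of_hom [Finite W] {Y : SimpleGraph V} {Y' : SimpleGraph W} (f : Y →g Y') :
    chiNat Y ≤ chiNat Y' :=
  chiNat_le_of_colorable ((colorable_chiNat Y').of_hom f)

lemma card_le_indepNum_mul_chiNat [Fintype V] (s : Finset V) :
    s.card ≤ indepNum G ↑s * chiNat (G.induce ↑s) :=
  card_le_indepNum_mul_of_colorable s (colorable_chiNat _)

end IndepNumChiNat

namespace TreeDecomp

variable {V : Type} {G : SimpleGraph V}

def singleBag [Fintype V] (G : SimpleGraph V) : TreeDecomp G where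
  ι := Unit
  tree := ⊥
  isTree := .of_subsingleton
  bag _ := Finset.univ
  covers_edge _ _ _ := ⟨(), Finset.mem_univ _, Finset.mem_univ _⟩
  support_connected v :=
    haveI : Nonempty {_t : Unit | v ∈ (Finset.univ : Finset V)} := ⟨⟨(), Finset.mem_univ v⟩⟩
    .of_subsingleton

def restrict (D : TreeDecomp G) (s : Set V) [DecidablePred (· ∈ s)] :
    TreeDecomp (G.induce s) where
  ι := D.ι
  tree := D.tree
  isTree := D.isTree
  bag t := (D.bag t).subtype (· ∈ s)
  covers_edge u v huv := by
    obtain ⟨t, hu, hv⟩ := D.covers_edge huv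
    exact ⟨t, by simpa using hu, by simpa using hv⟩
  support_connected v := by
    convert D.support_connected v using 4 <;> simp

/-- Root the tree anywhere and take a vertex `v` whose subtree of bags has its top `t` as deep as
possible: the subtree of every neighbour of `v` meets that of `v` and starts no deeper, so it
contains `t`. -/
lemma exists_mem_bag_forall_adj_mem_bag [Finite V] [Nonempty V] (D : TreeDecomp G) :
    ∃ v t, v ∈ D.bag t ∧ ∀ u, G.Adj v u → u ∈ D.bag t := by
  obtain ⟨r⟩ := D.isTree.connected.nonempty
  have htop : ∀ u, ∃ t, u ∈ D.bag t ∧ IsMinOn (D.tree.dist r) {t | u ∈ D.bag t} t := fun u =>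
    have hne : {t | u ∈ D.bag t}.Nonempty :=
      let ⟨t⟩ := (D.support_connected u).nonempty; ⟨t.1, t.2⟩
    ⟨_, Function.argminOn_mem _ _ hne, isMinOn_iff.mpr fun _ ht => Function.argminOn_le _ _ ht⟩
  choose top htop_mem htop_min using htop
  obtain ⟨v, hv⟩ := Finite.exists_max fun u => D.tree.dist r (top u)
  refine ⟨v, top v, htop_mem v, fun u hvu => ?_⟩
  obtain ⟨s, hsv, hsu⟩ := D.covers_edge hvu
  exact D.isTree.mem_of_isMinOn_dist (D.support_connected v) (D.support_connected u)
    (htop_mem v) (htop_min v) (htop_mem u) (hv u) hsv hsu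

lemma colorable_of_forall_card_bag_le [Fintype V] (D : TreeDecomp G) {w : ℕ}
    (hw : ∀ t, (D.bag t).card ≤ w) : G.Colorable w := by
  induction hn : Fintype.card V using Nat.strong_induction_on generalizing V with
  | _ n ih =>
    cases isEmpty_or_nonempty V
    · exact .of_isEmpty w
    classical
    obtain ⟨v, t, hvt, hadj⟩ := D.exists_mem_bag_forall_adj_mem_bag
    refine .of_induce_ne_of_adj_subset (N := (D.bag t).erase v) ?_
      (fun u hvu => Finset.mem_erase.mpr ⟨hvu.ne', hadj u hvu⟩)
      ((Finset.card_erase_lt_of_mem hvt).trans_le (hw t))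
    refine ih _ ?_ (D.restrict _) (fun t' => ?_) rfl
    · exact hn ▸ Fintype.card_subtype_lt (p := (· ≠ v)) (not_not.mpr rfl)
    · exact ((Finset.card_subtype _ _).trans_le (Finset.card_filter_le _ _)).trans (hw t')

lemma colorable_mul_of_forall_bag [Fintype V] (D : TreeDecomp G) {a c : ℕ}
    (ha : ∀ t, indepNum G ↑(D.bag t) ≤ a) (hc : ∀ t, chiNat (G.induce ↑(D.bag t)) ≤ c) :
    G.Colorable (a * c) :=
  D.colorable_of_forall_card_bag_le fun t =>
    (card_le_indepNum_mul_chiNat _).trans (Nat.mul_le_mul (ha t) (hc t))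

lemma chiNat_induce_le_mul [Fintype V] (D : TreeDecomp G) {s : Set V} {a c : ℕ}
    (hs : indepNum G s ≤ a) (hc : ∀ t, chiNat (G.induce ↑(D.bag t)) ≤ c) :
    chiNat (G.induce s) ≤ a * c := by
  classical
  refine chiNat_le_of_colorable <| (D.restrict s).colorable_mul_of_forall_bag
    (fun t => (indepNum_induce_le s _).trans hs) fun t => (chiNat_le_of_hom ?_).trans (hc t)
  exact ⟨fun x => ⟨x.1.1, by simpa [restrict] using x.2⟩, id⟩

lemma tw_add_one_le [Nonempty V] (D : TreeDecomp G) {w : ℕ} (hw : ∀ t, (D.bag t).card ≤ w) :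
    tw G + 1 ≤ w := by
  obtain ⟨⟨t, hvt⟩⟩ := (D.support_connected (Classical.arbitrary V)).nonempty
  have hw_pos : 0 < w := (Finset.card_pos.mpr ⟨_, hvt⟩).trans_le (hw t)
  have : tw G ≤ w - 1 := Nat.sInf_le ⟨D, fun t => by have := hw t; omega⟩
  omega

lemma exists_forall_bag_le_sInf [Fintype V] (G : SimpleGraph V) (f : Finset V → ℕ) :
    ∃ D : TreeDecomp G, ∀ t, f (D.bag t) ≤ sInf {k | ∃ D : TreeDecomp G, ∀ t, f (D.bag t) ≤ k} :=
  Nat.sInf_mem (s := {k | ∃ D : TreeDecomp G, ∀ t, f (D.bag t) ≤ k})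
    ⟨f Finset.univ, singleBag G, fun _ => le_rfl⟩

end TreeDecomp

theorem stmt3 {V : Type} [Fintype V] [Nonempty V] (G : SimpleGraph V) :
    tw G + 1 ≤ treeAlpha G ^ 2 * treeChi G := by
  obtain ⟨Da, hDa⟩ : ∃ D : TreeDecomp G, ∀ t, indepNum G ↑(D.bag t) ≤ treeAlpha G :=
    TreeDecomp.exists_forall_bag_le_sInf G fun B : Finset V => indepNum G (B : Set V)
  obtain ⟨Dc, hDc⟩ : ∃ D : TreeDecomp G, ∀ t, chiNat (G.induce ↑(D.bag t)) ≤ treeChi G :=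
    TreeDecomp.exists_forall_bag_le_sInf G fun B : Finset V => chiNat (G.induce (B : Set V))
  refine Da.tw_add_one_le fun t => ?_
  calc (Da.bag t).card ≤ indepNum G ↑(Da.bag t) * chiNat (G.induce ↑(Da.bag t)) :=
        card_le_indepNum_mul_chiNat _
    _ ≤ treeAlpha G * (treeAlpha G * treeChi G) :=
        Nat.mul_le_mul (hDa t) (Dc.chiNat_induce_le_mul (hDa t) hDc)
    _ = treeAlpha G ^ 2 * treeChi G := by ring
end

section
/- If H is a graph with |V(H)| ≥ 3, then tw(C(H)) = |V(H)| − 1, where C(H) is the 1-completion of H. -/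
open SimpleGraph

/-!
Lower bound: choose an end of every non-adjacent pair of `H` and attach the subdivision vertex of
the pair to the vertex of `H` at that end. The resulting branch sets are connected, pairwise
disjoint and pairwise adjacent in `C(H)`, i.e. they model a complete minor on `V(H)`. In a tree
decomposition the bags meeting a connected set form a subtree, these subtrees pairwise intersect,
and by the Helly property of subtrees one bag meets all `|V(H)|` branch sets.

Upper bound: a star with centre bag `V(H)` and, for every subdivision vertex `x` of a pair `{u, v}`,
a leaf bag `{u, v, x}` of size `3 ≤ |V(H)|`.
-/

open Function

namespace SimpleGraph

variable {ι : Type*} {T : SimpleGraph ι}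

/-- In a tree these are exactly the vertex sets of subtrees. -/
def PathConvex (T : SimpleGraph ι) (s : Set ι) : Prop :=
  ∀ ⦃a b : ι⦄ (p : T.Walk a b), p.IsPath → a ∈ s → b ∈ s → ∀ x ∈ p.support, x ∈ s

lemma PathConvex.inter {s t : Set ι} (hs : T.PathConvex s) (ht : T.PathConvex t) :
    T.PathConvex (s ∩ t) := fun _ _ p hp ha hb x hx =>
  ⟨hs p hp ha.1 hb.1 x hx, ht p hp ha.2 hb.2 x hx⟩

lemma Walk.IsPath.append {u v w : ι} {p : T.Walk u v} {q : T.Walk v w} (hp : p.IsPath)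
    (hq : q.IsPath) (hpq : ∀ x ∈ p.support, x ∈ q.support → x = v) : (p.append q).IsPath := by
  rw [Walk.isPath_def, Walk.support_append, List.nodup_append]
  refine ⟨hp.support_nodup, hq.support_nodup.tail, fun x hxp y hyq hxy => ?_⟩
  subst hxy
  obtain rfl := hpq x hxp (List.mem_of_mem_tail hyq)
  have := hq.support_nodup
  rw [← q.cons_tail_support] at this
  exact (List.nodup_cons.mp this).1 hyq

lemma IsAcyclic.support_subset_support_of_isPath (hT : T.IsAcyclic) {a b : ι} {p : T.Walk a b}
    (hp : p.IsPath) (q : T.Walk a b) : p.support ⊆ q.support := by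
  classical
  obtain rfl : p = q.bypass :=
    congrArg Subtype.val ((hT.subsingleton_path a b).elim ⟨p, hp⟩ ⟨_, q.bypass_isPath⟩)
  exact q.support_bypass_subset_support

lemma IsAcyclic.pathConvex_of_preconnected (hT : T.IsAcyclic) {s : Set ι}
    (hs : (T.induce s).Preconnected) : T.PathConvex s := by
  intro a b p hp ha hb x hx
  obtain ⟨q⟩ := hs ⟨a, ha⟩ ⟨b, hb⟩
  have hx' : x ∈ (q.map (Embedding.induce s).toHom).support :=
    hT.support_subset_support_of_isPath hp _ hx
  rw [Walk.support_map, List.mem_map] at hx'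
  obtain ⟨y, -, rfl⟩ := hx'
  exact y.2

/-- Follow `r` from `c` to its first vertex `m` on `p`: then `p` up to `m`, followed by `r` back to
`c`, is a path `a → c`, hence it is `q`. -/
lemma IsAcyclic.exists_mem_support_of_isPath (hT : T.IsAcyclic) {a b c : ι} {p : T.Walk a b}
    {q : T.Walk a c} {r : T.Walk c b} (hp : p.IsPath) (hq : q.IsPath) (hr : r.IsPath) :
    ∃ m ∈ p.support, m ∈ q.support ∧ m ∈ r.support := by
  classical
  obtain ⟨m, hmp, hmr, hfirst⟩ := r.exists_mem_support_forall_mem_support_imp_eq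
    p.support.toFinset ⟨b, by simp [Walk.end_mem_support]⟩
  rw [List.mem_toFinset] at hmp
  have hq' : ((p.takeUntil m hmp).append (r.takeUntil m hmr).reverse).IsPath := by
    refine (hp.takeUntil hmp).append (hr.takeUntil hmr).reverse fun x hxp hxr => ?_
    rw [Walk.support_reverse, List.mem_reverse] at hxr
    exact hfirst x (List.mem_toFinset.mpr (p.support_takeUntil_subset_support hmp hxp)) hxr
  refine ⟨m, hmp, ?_, hmr⟩
  obtain rfl : q = _ := congrArg Subtype.val ((hT.subsingleton_path a c).elim ⟨q, hq⟩ ⟨_, hq'⟩)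
  exact Walk.mem_support_append_iff _ _ |>.mpr (Or.inl (Walk.end_mem_support _))

lemma IsTree.inter_inter_nonempty_of_pathConvex (hT : T.IsTree) {s₁ s₂ s₃ : Set ι}
    (h₁ : T.PathConvex s₁) (h₂ : T.PathConvex s₂) (h₃ : T.PathConvex s₃)
    (h₁₂ : (s₁ ∩ s₂).Nonempty) (h₁₃ : (s₁ ∩ s₃).Nonempty) (h₂₃ : (s₂ ∩ s₃).Nonempty) :
    (s₁ ∩ s₂ ∩ s₃).Nonempty := by
  obtain ⟨a, ha₁, ha₂⟩ := h₁₂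
  obtain ⟨b, hb₁, hb₃⟩ := h₁₃
  obtain ⟨c, hc₂, hc₃⟩ := h₂₃
  obtain ⟨p, hp, -⟩ := hT.existsUnique_path a b
  obtain ⟨q, hq, -⟩ := hT.existsUnique_path a c
  obtain ⟨r, hr, -⟩ := hT.existsUnique_path c b
  obtain ⟨m, hmp, hmq, hmr⟩ := hT.isAcyclic.exists_mem_support_of_isPath hp hq hr
  exact ⟨m, ⟨h₁ p hp ha₁ hb₁ m hmp, h₂ q hq ha₂ hc₂ m hmq⟩, h₃ r hr hc₃ hb₃ m hmr⟩

lemma IsTree.exists_mem_forall_mem_of_pathConvex (hT : T.IsTree) {κ : Type*}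
    {s : κ → Set ι} (hs : ∀ k, T.PathConvex (s k)) (hst : ∀ j k, (s j ∩ s k).Nonempty)
    (F : Finset κ) {c : Set ι} (hc : T.PathConvex c) (hcne : c.Nonempty)
    (hcs : ∀ k, (c ∩ s k).Nonempty) : ∃ x ∈ c, ∀ k ∈ F, x ∈ s k := by
  classical
  induction F using Finset.induction_on generalizing c with
  | empty => simpa [Set.Nonempty] using hcne
  | insert k F _ ih =>
    obtain ⟨x, ⟨hxc, hxk⟩, hxF⟩ := ih (hc.inter (hs k)) (hcs k) fun j =>
      hT.inter_inter_nonempty_of_pathConvex hc (hs k) (hs j) (hcs k) (hcs j) (hst k j)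
    exact ⟨x, hxc, by simpa [hxk] using hxF⟩

/-- The Helly property of subtrees of a tree. -/
lemma IsTree.exists_forall_mem_of_pathConvex (hT : T.IsTree) {κ : Type*} [Fintype κ]
    [Nonempty κ] {s : κ → Set ι} (hs : ∀ k, T.PathConvex (s k))
    (hst : ∀ j k, (s j ∩ s k).Nonempty) : ∃ x, ∀ k, x ∈ s k := by
  let k₀ : κ := Classical.arbitrary κ
  obtain ⟨x, -, hx⟩ := hT.exists_mem_forall_mem_of_pathConvex hs hst Finset.univ (hs k₀)
    (by simpa using hst k₀ k₀) (hst k₀)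
  exact ⟨x, fun k => hx k (Finset.mem_univ k)⟩

lemma connected_induce_starGraph {ι : Type*} {r : ι} {s : Set ι} (hr : r ∈ s) :
    ((starGraph r).induce s).Connected := by
  refine (connected_iff_exists_forall_reachable _).mpr ⟨⟨r, hr⟩, fun ⟨x, hx⟩ => ?_⟩
  rcases eq_or_ne r x with rfl | hrx
  · rfl
  · exact Adj.reachable (starGraph_center_adj hrx)

end SimpleGraph

namespace TreeDecomp

variable {W : Type} {G : SimpleGraph W} (D : TreeDecomp G)

def bagsMeeting (X : Set W) : Set D.ι := {t | ∃ w ∈ X, w ∈ D.bag t}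

lemma exists_mem_bag (w : W) : ∃ t, w ∈ D.bag t :=
  let ⟨⟨t, ht⟩⟩ := (D.support_connected w).nonempty
  ⟨t, ht⟩

lemma bagsMeeting_inter_nonempty_of_adj {X Y : Set W} {a b : W} (ha : a ∈ X) (hb : b ∈ Y)
    (hab : G.Adj a b) : (D.bagsMeeting X ∩ D.bagsMeeting Y).Nonempty :=
  let ⟨t, hat, hbt⟩ := D.covers_edge hab
  ⟨t, ⟨a, ha, hat⟩, ⟨b, hb, hbt⟩⟩

lemma preconnected_induce_bagsMeeting {X : Set W} (hX : (G.induce X).Preconnected) :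
    (D.tree.induce (D.bagsMeeting X)).Preconnected := by
  have within_bag : ∀ {w} (hw : w ∈ X) {t t'} (ht : w ∈ D.bag t) (ht' : w ∈ D.bag t'),
      (D.tree.induce (D.bagsMeeting X)).Reachable ⟨t, w, hw, ht⟩ ⟨t', w, hw, ht'⟩ :=
    fun hw _ _ ht ht' => ((D.support_connected _).preconnected ⟨_, ht⟩ ⟨_, ht'⟩).map
      (induceHomOfLE _ fun _ hs => by exact ⟨_, hw, hs⟩).toHom
  have along_walk : ∀ {a b} (p : G.Walk a b) (hp : ∀ w ∈ p.support, w ∈ X) {t t'}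
      (ha : a ∈ D.bag t) (hb : b ∈ D.bag t'),
      (D.tree.induce (D.bagsMeeting X)).Reachable
        ⟨t, a, hp a p.start_mem_support, ha⟩ ⟨t', b, hp b p.end_mem_support, hb⟩ := by
    intro a b p
    induction p with
    | nil => exact fun hp _ _ ha hb => within_bag (hp _ (List.mem_singleton_self _)) ha hb
    | @cons a c b hac p ih =>
      intro hp t t' ha hb
      obtain ⟨s, has, hcs⟩ := D.covers_edge hac
      have hp' : ∀ w ∈ p.support, w ∈ X := fun w hw => hp w (List.mem_cons_of_mem _ hw)
      exact (within_bag (hp a (Walk.start_mem_support _)) ha has).trans (ih hp' hcs hb)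
  rintro ⟨t, a, ha, hat⟩ ⟨t', b, hb, hbt'⟩
  obtain ⟨q⟩ := hX ⟨a, ha⟩ ⟨b, hb⟩
  have hq : ∀ w ∈ (q.map (Embedding.induce X).toHom).support, w ∈ X := by
    intro w hw
    rw [Walk.support_map, List.mem_map] at hw
    obtain ⟨⟨w, hw⟩, -, rfl⟩ := hw
    exact hw
  exact along_walk _ hq hat hbt'

/-- The sets `X k` are the branch sets of a complete minor of `G` on `κ`. -/
theorem exists_card_le_card_bag {κ : Type*} [Fintype κ] {X : κ → Set W}
    (hdisj : Pairwise (Disjoint on X)) (hconn : ∀ k, (G.induce (X k)).Connected)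
    (hadj : Pairwise fun j k => ∃ a ∈ X j, ∃ b ∈ X k, G.Adj a b) :
    ∃ t, Fintype.card κ ≤ (D.bag t).card := by
  cases isEmpty_or_nonempty κ
  · obtain ⟨t⟩ := D.isTree.connected.nonempty
    exact ⟨t, by simp⟩
  have hmeet : ∀ j k, (D.bagsMeeting (X j) ∩ D.bagsMeeting (X k)).Nonempty := by
    intro j k
    rcases eq_or_ne j k with rfl | hjk
    · obtain ⟨w, hw⟩ := (hconn j).nonempty
      obtain ⟨t, ht⟩ := D.exists_mem_bag w
      exact ⟨t, ⟨w, hw, ht⟩, ⟨w, hw, ht⟩⟩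
    · obtain ⟨a, ha, b, hb, hab⟩ := hadj hjk
      exact D.bagsMeeting_inter_nonempty_of_adj ha hb hab
  obtain ⟨t, ht⟩ := D.isTree.exists_forall_mem_of_pathConvex
    (fun k => D.isTree.isAcyclic.pathConvex_of_preconnected
      (D.preconnected_induce_bagsMeeting (hconn k).preconnected)) hmeet
  choose f hfX hft using ht
  refine ⟨t, ?_⟩
  rw [← Finset.card_univ]
  exact Finset.card_le_card_of_injOn f (fun k _ => hft k) fun j _ k _ hjk =>
    by_contra fun hne => Set.disjoint_left.mp (hdisj hne) (hfX j) (hjk ▸ hfX k)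

end TreeDecomp

section Completion

variable {V : Type} {H : SimpleGraph V}

@[simp]
lemma completion_adj_inl_inl {u v : V} :
    (completion H).Adj (.inl u) (.inl v) ↔ H.Adj u v := by
  simp only [completion, fromRel_adj, ne_eq, Sum.inl.injEq]
  exact ⟨fun ⟨_, h⟩ => h.elim id Adj.symm, fun h => ⟨h.ne, .inl h⟩⟩

@[simp]
lemma completion_adj_inl_inr {v : V} {p : {p : Sym2 V // ¬ p.IsDiag ∧ p ∉ H.edgeSet}} :
    (completion H).Adj (.inl v) (.inr p) ↔ v ∈ p.1 := by
  simp [completion]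

@[simp]
lemma completion_adj_inr_inl {v : V} {p : {p : Sym2 V // ¬ p.IsDiag ∧ p ∉ H.edgeSet}} :
    (completion H).Adj (.inr p) (.inl v) ↔ v ∈ p.1 := by
  rw [adj_comm, completion_adj_inl_inr]

@[simp]
lemma completion_not_adj_inr_inr {p q : {p : Sym2 V // ¬ p.IsDiag ∧ p ∉ H.edgeSet}} :
    ¬ (completion H).Adj (.inr p) (.inr q) := by
  simp [completion]

variable (H) in
/-- Branch sets of a complete minor on `V` in `completion H`: the subdivision vertex of a pair
joins the branch set of the end `out.1` of the pair. -/
def completionBranchSet (v : V) : Set (V ⊕ {p : Sym2 V // ¬ p.IsDiag ∧ p ∉ H.edgeSet}) :=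
  insert (.inl v) (.inr '' {p | p.1.out.1 = v})

@[simp]
lemma inl_mem_completionBranchSet {u v : V} : .inl u ∈ completionBranchSet H v ↔ u = v := by
  simp [completionBranchSet]

@[simp]
lemma inr_mem_completionBranchSet {v : V} {p : {p : Sym2 V // ¬ p.IsDiag ∧ p ∉ H.edgeSet}} :
    .inr p ∈ completionBranchSet H v ↔ p.1.out.1 = v := by
  simp [completionBranchSet]

lemma pairwise_disjoint_completionBranchSet :
    Pairwise (Disjoint on completionBranchSet H) := by
  intro u v huv
  rw [onFun, Set.disjoint_left]
  rintro (x | p) hu hv <;> simp_all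

lemma connected_induce_completionBranchSet (v : V) :
    ((completion H).induce (completionBranchSet H v)).Connected := by
  refine (connected_iff_exists_forall_reachable _).mpr ⟨⟨.inl v, by simp⟩, ?_⟩
  rintro ⟨x | p, hx⟩
  · obtain rfl : x = v := by simpa using hx
    rfl
  · refine Adj.reachable (induce_adj.mpr ?_)
    rw [inr_mem_completionBranchSet] at hx
    exact completion_adj_inl_inr.mpr (hx ▸ p.1.out_fst_mem)

lemma exists_adj_completionBranchSet {u v : V} (huv : u ≠ v) :
    ∃ a ∈ completionBranchSet H u, ∃ b ∈ completionBranchSet H v, (completion H).Adj a b := by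
  by_cases hadj : H.Adj u v
  · exact ⟨.inl u, by simp, .inl v, by simp, by simpa using hadj⟩
  let p : {p : Sym2 V // ¬ p.IsDiag ∧ p ∉ H.edgeSet} := ⟨s(u, v), by simpa using huv, hadj⟩
  rcases Sym2.mem_iff.mp p.1.out_fst_mem with hu | hv
  · exact ⟨.inr p, by simpa using hu, .inl v, by simp, by simp [p]⟩
  · exact ⟨.inl u, by simp, .inr p, by simpa using hv, by simp [p]⟩

variable (H) in
def completionStarBag [Fintype V] [DecidableEq V] :
    Option {p : Sym2 V // ¬ p.IsDiag ∧ p ∉ H.edgeSet} →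
      Finset (V ⊕ {p : Sym2 V // ¬ p.IsDiag ∧ p ∉ H.edgeSet})
  | none => Finset.univ.map .inl
  | some p => insert (.inr p) (p.1.toFinset.map .inl)

variable (H) in
def completionStarDecomp [Fintype V] [DecidableEq V] : TreeDecomp (completion H) where
  ι := Option {p : Sym2 V // ¬ p.IsDiag ∧ p ∉ H.edgeSet}
  tree := starGraph none
  isTree := isTree_starGraph none
  bag := completionStarBag H
  covers_edge := by
    rintro (u | p) (v | q) h
    · exact ⟨none, by simp [completionStarBag], by simp [completionStarBag]⟩
    · exact ⟨some q, by simpa [completionStarBag] using h, by simp [completionStarBag]⟩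
    · exact ⟨some p, by simp [completionStarBag], by simpa [completionStarBag] using h⟩
    · exact absurd h completion_not_adj_inr_inr
  support_connected := by
    rintro (v | p)
    · exact connected_induce_starGraph (by simp [completionStarBag])
    · have hsupp : {t | .inr p ∈ completionStarBag H t} = {some p} := by
        ext (_ | q) <;> simp [completionStarBag, eq_comm]
      rw [hsupp, induce_singleton_eq_top]
      exact connected_top

lemma card_completionStarBag_le [Fintype V] [DecidableEq V] (hV : 3 ≤ Fintype.card V)
    (t : Option {p : Sym2 V // ¬ p.IsDiag ∧ p ∉ H.edgeSet}) :
    (completionStarBag H t).card ≤ Fintype.card V := by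
  rcases t with _ | p
  · simp [completionStarBag]
  · calc (completionStarBag H (some p)).card
        ≤ (p.1.toFinset.map .inl).card + 1 := Finset.card_insert_le _ _
      _ = 3 := by rw [Finset.card_map, Sym2.card_toFinset_of_not_isDiag _ p.2.1]
      _ ≤ Fintype.card V := hV

end Completion

lemma tw_eq_of_forall_exists_le_card_bag {W : Type} {G : SimpleGraph W} {n : ℕ}
    (hlow : ∀ D : TreeDecomp G, ∃ t, n ≤ (D.bag t).card) (D : TreeDecomp G)
    (hD : ∀ t, (D.bag t).card ≤ n) : tw G = n - 1 := by
  have hmem : n - 1 ∈ {w | ∃ D : TreeDecomp G, ∀ t, (D.bag t).card ≤ w + 1} :=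
    ⟨D, fun t => (hD t).trans (by omega)⟩
  obtain ⟨D', hD'⟩ := Nat.sInf_mem ⟨_, hmem⟩
  obtain ⟨t, ht⟩ := hlow D'
  have hle := Nat.sInf_le hmem
  have hge := hD' t
  unfold tw
  omega

theorem stmt6 {V : Type} [Fintype V] (H : SimpleGraph V) (hV : 3 ≤ Fintype.card V) :
    tw (completion H) = Fintype.card V - 1 := by
  classical
  refine tw_eq_of_forall_exists_le_card_bag (fun D => ?_) (completionStarDecomp H)
    (card_completionStarBag_le hV)
  exact D.exists_card_le_card_bag pairwise_disjoint_completionBranchSet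
    connected_induce_completionBranchSet fun _ _ => exists_adj_completionBranchSet
end
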